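/- arXiv:2207.04740 — 2 statements merged into one kernel-verified Lean document; each statement's English description precedes it below -/
import Mathlib

section
/- Let Ω ⊆ ℝ² be open and let f, p, u : Ω → ℝ be differentiable. Consider the dust metric components g^d₁₁ = e^p, g^d₃₃ = x² − f², g^d₃₄ = −f, g^d₄₄ = −1 and the vacuum metric components g^v₁₁ = e^p·cosh(u), g^v₃₃ = x²·cosh(u) − f²/cosh(u), g^v₃₄ = −f/cosh(u), g^v₄₄ = −1/cosh(u), all as functions on Ω. Then at every point b ∈ Ω with u(b) = 0, each vacuum component has the same value and the same Fréchet derivative at b as the corresponding dust component: g^v₁₁ ≡¹ g^d₁₁, g^v₃₃ ≡¹ g^d₃₃, g^v₃₄ ≡¹ g^d₃₄, g^v₄₄ ≡¹ g^d₄₄ at b. -/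
/-!
At a point where `u = 0`, the function `cosh ∘ u` has value `1` and, since `cosh' = sinh`
vanishes at `0`, derivative `0`; the same then holds for `1 / cosh ∘ u`. Multiplying or
dividing any differentiable function by such a function changes neither its value nor its
derivative there, and each vacuum coefficient is obtained from the corresponding dust
coefficient in exactly this way, term by term.
-/

def FirstOrderContactAt (f g : ℝ × ℝ → ℝ) (b : ℝ × ℝ) : Prop :=
  f b = g b ∧ fderiv ℝ f b = fderiv ℝ g b

section TangentToOne

variable {𝕜 E : Type*} [NontriviallyNormedField 𝕜] [NormedAddCommGroup E] [NormedSpace 𝕜 E]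
  {b : E}

theorem HasFDerivAt.mul_of_tangent_one {𝔸 : Type*} [NormedCommRing 𝔸] [NormedAlgebra 𝕜 𝔸]
    {A φ : E → 𝔸} {A' : E →L[𝕜] 𝔸} (hA : HasFDerivAt A A' b)
    (hφ : HasFDerivAt φ (0 : E →L[𝕜] 𝔸) b) (hφb : φ b = 1) :
    HasFDerivAt (fun x => A x * φ x) A' b :=
  (hA.fun_mul hφ).congr_fderiv (by ext; simp [hφb])

variable {φ : E → 𝕜}

theorem HasFDerivAt.inv_of_tangent_one (hφ : HasFDerivAt φ (0 : E →L[𝕜] 𝕜) b)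
    (hφb : φ b = 1) : HasFDerivAt (fun x => (φ x)⁻¹) (0 : E →L[𝕜] 𝕜) b :=
  ((hasFDerivAt_inv (by simp [hφb])).comp b hφ).congr_fderiv (by simp)

theorem HasFDerivAt.div_of_tangent_one {A : E → 𝕜} {A' : E →L[𝕜] 𝕜} (hA : HasFDerivAt A A' b)
    (hφ : HasFDerivAt φ (0 : E →L[𝕜] 𝕜) b) (hφb : φ b = 1) :
    HasFDerivAt (fun x => A x / φ x) A' b := by
  simpa only [div_eq_mul_inv] using
    hA.mul_of_tangent_one (hφ.inv_of_tangent_one hφb) (by simp [hφb])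

end TangentToOne

theorem HasFDerivAt.cosh_of_eq_zero {E : Type*} [NormedAddCommGroup E] [NormedSpace ℝ E]
    {u : E → ℝ} {u' : E →L[ℝ] ℝ} {b : E} (hu : HasFDerivAt u u' b) (hub : u b = 0) :
    HasFDerivAt (fun x => Real.cosh (u x)) (0 : E →L[ℝ] ℝ) b := by
  simpa [hub] using hu.cosh

theorem FirstOrderContactAt.of_hasFDerivAt {F G : ℝ × ℝ → ℝ} {L : ℝ × ℝ →L[ℝ] ℝ} {b : ℝ × ℝ}
    (hF : HasFDerivAt F L b) (hG : HasFDerivAt G L b) (hFG : F b = G b) :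
    FirstOrderContactAt F G b :=
  ⟨hFG, hF.fderiv.trans hG.fderiv.symm⟩

theorem companion_metrics_match_general
    (Ω : Set (ℝ × ℝ))
    (f P u : ℝ × ℝ → ℝ)
    (hf : ∀ p ∈ Ω, DifferentiableAt ℝ f p)
    (hP : ∀ p ∈ Ω, DifferentiableAt ℝ P p)
    (hu : ∀ p ∈ Ω, DifferentiableAt ℝ u p) :
    ∀ b ∈ Ω, u b = 0 →
      FirstOrderContactAt
        (fun p => Real.exp (P p) * Real.cosh (u p))
        (fun p => Real.exp (P p)) b ∧
      FirstOrderContactAt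
        (fun p => p.1 ^ 2 * Real.cosh (u p) - f p ^ 2 / Real.cosh (u p))
        (fun p => p.1 ^ 2 - f p ^ 2) b ∧
      FirstOrderContactAt
        (fun p => -f p / Real.cosh (u p))
        (fun p => -f p) b ∧
      FirstOrderContactAt
        (fun p => -1 / Real.cosh (u p))
        (fun _ => (-1 : ℝ)) b := by
  intro b hb hub
  have hcosh := HasFDerivAt.cosh_of_eq_zero (hu b hb).hasFDerivAt hub
  have hcosh_b : Real.cosh (u b) = 1 := by rw [hub, Real.cosh_zero]
  have hexpP := (hP b hb).hasFDerivAt.exp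
  have hf2 := (hf b hb).hasFDerivAt.pow 2
  have hnegf := (hf b hb).hasFDerivAt.neg
  have hx2 := (hasFDerivAt_fst (𝕜 := ℝ) (p := b)).pow 2
  have hneg1 : HasFDerivAt (fun _ : ℝ × ℝ => (-1 : ℝ)) (0 : ℝ × ℝ →L[ℝ] ℝ) b :=
    hasFDerivAt_const _ _
  refine ⟨.of_hasFDerivAt (hexpP.mul_of_tangent_one hcosh hcosh_b) hexpP (by simp [hcosh_b]),
    .of_hasFDerivAt ((hx2.mul_of_tangent_one hcosh hcosh_b).sub
      (hf2.div_of_tangent_one hcosh hcosh_b)) (hx2.sub hf2) (by simp [hcosh_b]),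
    .of_hasFDerivAt (hnegf.div_of_tangent_one hcosh hcosh_b) hnegf (by simp [hcosh_b]),
    .of_hasFDerivAt (hneg1.div_of_tangent_one hcosh hcosh_b) hneg1 (by simp [hcosh_b])⟩

/-- **The companion dust and vacuum metrics match along the boundary u = 0.**
The nontrivial coefficients of the van Stockum dust metric
`g^d = e^p (dx² + dy²) + x² dφ² − (f dφ + dt)²` and of its companion normalised
Papapetrou vacuum metric
`g^v = e^p cosh u (dx² + dy²) + x² cosh u dφ² − (f dφ + dt)²/cosh u`
have first-order contact at every point of `Ω` where `u = 0`. -/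
theorem companion_metrics_match
    (Ω : Set (ℝ × ℝ)) (hΩ : IsOpen Ω)
    (f P u : ℝ × ℝ → ℝ)
    (hf : ∀ p ∈ Ω, DifferentiableAt ℝ f p)
    (hP : ∀ p ∈ Ω, DifferentiableAt ℝ P p)
    (hu : ∀ p ∈ Ω, DifferentiableAt ℝ u p) :
    ∀ b ∈ Ω, u b = 0 →
      FirstOrderContactAt
        (fun p => Real.exp (P p) * Real.cosh (u p))
        (fun p => Real.exp (P p)) b ∧
      FirstOrderContactAt
        (fun p => p.1 ^ 2 * Real.cosh (u p) - f p ^ 2 / Real.cosh (u p))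
        (fun p => p.1 ^ 2 - f p ^ 2) b ∧
      FirstOrderContactAt
        (fun p => -f p / Real.cosh (u p))
        (fun p => -f p) b ∧
      FirstOrderContactAt
        (fun p => -1 / Real.cosh (u p))
        (fun _ => (-1 : ℝ)) b :=
  companion_metrics_match_general Ω f P u hf hP hu
end

section
/- Let Ω ⊆ ℝ² be open with x ≠ 0 at every point (x,y) ∈ Ω, and let f : Ω → ℝ be C² satisfying f_xx + f_yy − f_x/x = 0 on Ω (subscripts denote partial derivatives). Then the 1-form ((f_y² − f_x²)/(2x)) dx + (−f_x f_y/x) dy is closed on Ω, i.e. ∂_y((f_y² − f_x²)/(2x)) = ∂_x(−f_x f_y/x) on Ω. -/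
/- Write `u = f_x`, `v = f_y`. A direct computation gives
`∂_y((v² − u²)/(2x)) − ∂_x(−uv/x) = (v (u_x + v_y − u/x) + u (v_x − u_y)) / x`;
the first bracket vanishes by the equation for `f` and the second by the symmetry of the second
derivative of the C² function `f`. -/

/-- Partial derivative with respect to the first coordinate of `ℝ × ℝ`. -/
noncomputable def pdx (f : ℝ × ℝ → ℝ) (p : ℝ × ℝ) : ℝ := fderiv ℝ f p (1, 0)

/-- Partial derivative with respect to the second coordinate of `ℝ × ℝ`. -/
noncomputable def pdy (f : ℝ × ℝ → ℝ) (p : ℝ × ℝ) : ℝ := fderiv ℝ f p (0, 1)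

section PartialDerivatives

variable {g : ℝ × ℝ → ℝ} {p : ℝ × ℝ}

theorem DifferentiableAt.hasDerivAt_pdx (hg : DifferentiableAt ℝ g p) :
    HasDerivAt (fun t => g (t, p.2)) (pdx g p) p.1 :=
  hg.hasFDerivAt.comp_hasDerivAt_of_eq p.1
    ((hasDerivAt_id p.1).prodMk (hasDerivAt_const p.1 p.2)) rfl

theorem DifferentiableAt.hasDerivAt_pdy (hg : DifferentiableAt ℝ g p) :
    HasDerivAt (fun t => g (p.1, t)) (pdy g p) p.2 :=
  hg.hasFDerivAt.comp_hasDerivAt_of_eq p.2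
    ((hasDerivAt_const p.2 p.1).prodMk (hasDerivAt_id p.2)) rfl

theorem ContDiffAt.hasFDerivAt_fderiv_apply (hg : ContDiffAt ℝ 2 g p) (w : ℝ × ℝ) :
    HasFDerivAt (fun q => fderiv ℝ g q w) ((fderiv ℝ (fderiv ℝ g) p).flip w) p := by
  have hg' := ((hg.fderiv_right (m := 1) le_rfl).differentiableAt one_ne_zero).hasFDerivAt
  simpa using hg'.clm_apply (hasFDerivAt_const w p)

theorem ContDiffAt.differentiableAt_pdx (hg : ContDiffAt ℝ 2 g p) :
    DifferentiableAt ℝ (pdx g) p :=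
  (hg.hasFDerivAt_fderiv_apply (1, 0)).differentiableAt

theorem ContDiffAt.differentiableAt_pdy (hg : ContDiffAt ℝ 2 g p) :
    DifferentiableAt ℝ (pdy g) p :=
  (hg.hasFDerivAt_fderiv_apply (0, 1)).differentiableAt

theorem ContDiffAt.pdy_pdx_eq_pdx_pdy (hg : ContDiffAt ℝ 2 g p) :
    pdy (pdx g) p = pdx (pdy g) p := by
  have hx : HasFDerivAt (pdx g) _ p := hg.hasFDerivAt_fderiv_apply (1, 0)
  have hy : HasFDerivAt (pdy g) _ p := hg.hasFDerivAt_fderiv_apply (0, 1)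
  rw [pdy, pdx, hx.fderiv, hy.fderiv]
  exact hg.isSymmSndFDerivAt (by simp) _ _

end PartialDerivatives

theorem pdy_sub_pdx_eq {u v : ℝ × ℝ → ℝ} {p : ℝ × ℝ} (hu : DifferentiableAt ℝ u p)
    (hv : DifferentiableAt ℝ v p) (hp : p.1 ≠ 0) :
    pdy (fun q => (v q ^ 2 - u q ^ 2) / (2 * q.1)) p - pdx (fun q => -(u q * v q) / q.1) p =
      (v p * (pdx u p + pdy v p - u p / p.1) + u p * (pdx v p - pdy u p)) / p.1 := by
  have hG : DifferentiableAt ℝ (fun q => (v q ^ 2 - u q ^ 2) / (2 * q.1)) p := by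
    fun_prop (disch := simpa using hp)
  have hH : DifferentiableAt ℝ (fun q => -(u q * v q) / q.1) p := by
    fun_prop (disch := exact hp)
  have hGy := ((hv.hasDerivAt_pdy.fun_pow 2).fun_sub (hu.hasDerivAt_pdy.fun_pow 2)).fun_div
    (hasDerivAt_const p.2 (2 * p.1)) (by simpa using hp)
  have hHx := (hu.hasDerivAt_pdx.fun_mul hv.hasDerivAt_pdx).fun_neg.fun_div (hasDerivAt_id' p.1) hp
  rw [hG.hasDerivAt_pdy.unique hGy, hH.hasDerivAt_pdx.unique hHx]
  field_simp
  ring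

/-- **Integrability condition for the conformal factor of the van Stockum
metric.**  If `f` is C² on an open set `Ω ⊆ {x ≠ 0}` and satisfies
`f_xx + f_yy − f_x/x = 0` on `Ω`, then the 1-form
`((f_y² − f_x²)/(2x)) dx + (−f_x f_y/x) dy` is closed on `Ω`. -/
theorem conformal_factor_integrability
    (Ω : Set (ℝ × ℝ)) (hΩ : IsOpen Ω) (hx : ∀ p ∈ Ω, p.1 ≠ 0)
    (f : ℝ × ℝ → ℝ) (hf : ContDiffOn ℝ 2 f Ω)
    (hfeq : ∀ p ∈ Ω, pdx (pdx f) p + pdy (pdy f) p - pdx f p / p.1 = 0) :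
    ∀ p ∈ Ω,
      pdy (fun q => ((pdy f q) ^ 2 - (pdx f q) ^ 2) / (2 * q.1)) p =
      pdx (fun q => -(pdx f q * pdy f q) / q.1) p := by
  intro p hp
  have hfp : ContDiffAt ℝ 2 f p := hf.contDiffAt (hΩ.mem_nhds hp)
  rw [← sub_eq_zero, pdy_sub_pdx_eq hfp.differentiableAt_pdx hfp.differentiableAt_pdy (hx p hp),
    hfeq p hp, hfp.pdy_pdx_eq_pdx_pdy]
  simp
end
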